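/- arXiv:1602.08226 — 4 statements merged into one kernel-verified Lean document; each statement's English description precedes it below -/
import Mathlib

section
/- Let A^{(1)} = tridiag(a_1, a_0, a_1) be an infinite symmetric tridiagonal Toeplitz matrix with a_0 ≥ 2|a_1|, a_0 > 0, and define recursively A^{(k)} = I_k^{k-1} A^{(k-1)} I_{k-1}^k, where I_{k-1}^k is the standard linear-interpolation prolongation with stencil (1/2)[1, 2, 1] and I_k^{k-1} = (1/2)(I_{k-1}^k)^T. Then each A^{(k)} is again symmetric tridiagonal Toeplitz, A^{(k)} = tridiag(a_1^{(k)}, a_0^{(k)}, a_1^{(k)}), with a_0^{(k)} = 8^{-(k-1)}[(4C_k + 2^{k-1}) a_0 + 8 C_k a_1] and a_1^{(k)} = 8^{-(k-1)}[C_k a_0 + (2C_k + 2^{k-1}) a_1], where C_k = 2^{k-2}·(2^{2k-2} - 1)/3. -/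
/-- Galerkin coarsening of the symmetric tridiagonal Toeplitz matrix
`A^{(1)} = tridiag(a₁, a₀, a₁)` (with `a₀ ≥ 2|a₁|`, `a₀ > 0`) by full-weighting
restriction and linear-interpolation prolongation.  The coarse symbols
`a k j` (the `j`-th off-diagonal entry of `A^{(k)}`, on the doubly infinite index set)
satisfy the stencil recursion; the conclusion is that each `A^{(k)}` is again symmetric
tridiagonal Toeplitz, with
`a₀^{(k)} = 8^{-(k-1)}[(4C_k + 2^{k-1}) a₀ + 8 C_k a₁]` and
`a₁^{(k)} = 8^{-(k-1)}[C_k a₀ + (2C_k + 2^{k-1}) a₁]`, where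
`C_k = 2^{k-2}(2^{2k-2} - 1)/3`. -/
theorem galerkin_tridiag_coarsening (a0 a1 : ℝ) (ha0 : 2 * |a1| ≤ a0) (ha0pos : 0 < a0)
    (a : ℕ → ℕ → ℝ)
    (hinit0 : a 1 0 = a0) (hinit1 : a 1 1 = a1) (hinit : ∀ j, 2 ≤ j → a 1 j = 0)
    (hrec0 : ∀ k, 2 ≤ k →
      a k 0 = (1 / 8) * (6 * a (k - 1) 0 + 8 * a (k - 1) 1 + 2 * a (k - 1) 2))
    (hrec : ∀ k, 2 ≤ k → ∀ j, 1 ≤ j →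
      a k j = (1 / 8) * (a (k - 1) (2 * j - 2) + 4 * a (k - 1) (2 * j - 1) +
        6 * a (k - 1) (2 * j) + 4 * a (k - 1) (2 * j + 1) + a (k - 1) (2 * j + 2))) :
    ∀ k : ℕ, 1 ≤ k →
      a k 0 = (8 : ℝ) ^ (-((k : ℤ) - 1)) *
          ((4 * ((2 : ℝ) ^ ((k : ℤ) - 2) * ((2 : ℝ) ^ (2 * (k : ℤ) - 2) - 1) / 3)
              + (2 : ℝ) ^ ((k : ℤ) - 1)) * a0
            + 8 * ((2 : ℝ) ^ ((k : ℤ) - 2) * ((2 : ℝ) ^ (2 * (k : ℤ) - 2) - 1) / 3) * a1) ∧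
      a k 1 = (8 : ℝ) ^ (-((k : ℤ) - 1)) *
          (((2 : ℝ) ^ ((k : ℤ) - 2) * ((2 : ℝ) ^ (2 * (k : ℤ) - 2) - 1) / 3) * a0
            + (2 * ((2 : ℝ) ^ ((k : ℤ) - 2) * ((2 : ℝ) ^ (2 * (k : ℤ) - 2) - 1) / 3)
              + (2 : ℝ) ^ ((k : ℤ) - 1)) * a1) ∧
      ∀ j, 2 ≤ j → a k j = 0 := by

  intro k hk
  induction k, hk using Nat.le_induction with
  | base =>
    refine ⟨?_, ?_, hinit⟩
    · rw [hinit0]; norm_num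
    · rw [hinit1]; norm_num
  | succ k hk ih =>
    obtain ⟨ih0, ih1, ih2⟩ := ih
    have hk2 : 2 ≤ k + 1 := by omega
    have hs : k + 1 - 1 = k := rfl
    have h0 := hrec0 (k + 1) hk2
    have h1 := hrec (k + 1) hk2 1 le_rfl
    rw [hs] at h0 h1
    norm_num at h1
    have ht : ((2 : ℝ) ^ (k : ℤ)) ≠ 0 := zpow_ne_zero _ two_ne_zero
    have h2k : (2 : ℝ) ^ (2 * (k : ℤ)) = 2 ^ (k : ℤ) * 2 ^ (k : ℤ) := by
      rw [two_mul, zpow_add₀ two_ne_zero]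
    have h8k : (8 : ℝ) ^ (k : ℤ) = 2 ^ (k : ℤ) * 2 ^ (k : ℤ) * 2 ^ (k : ℤ) := by
      rw [show (8 : ℝ) = 2 * 2 * 2 by norm_num, mul_zpow, mul_zpow]
    have e1 : (2 : ℝ) ^ ((k : ℤ) - 2) = 2 ^ (k : ℤ) / 4 := by
      rw [zpow_sub₀ two_ne_zero]; norm_num
    have e2 : (2 : ℝ) ^ (2 * (k : ℤ) - 2) = 2 ^ (k : ℤ) * 2 ^ (k : ℤ) / 4 := by
      rw [zpow_sub₀ two_ne_zero, h2k]; norm_num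
    have e3 : (2 : ℝ) ^ ((k : ℤ) - 1) = 2 ^ (k : ℤ) / 2 := by
      rw [zpow_sub₀ two_ne_zero]; norm_num
    have e4 : (8 : ℝ) ^ (-((k : ℤ) - 1)) = 8 / (2 ^ (k : ℤ) * 2 ^ (k : ℤ) * 2 ^ (k : ℤ)) := by
      rw [zpow_neg, zpow_sub₀ (by norm_num : (8:ℝ) ≠ 0), h8k, inv_div]; norm_num
    have f1 : (2 : ℝ) ^ (((k : ℕ) : ℤ) + 1 - 2) = 2 ^ (k : ℤ) / 2 := by
      rw [show ((k : ℕ) : ℤ) + 1 - 2 = (k : ℤ) - 1 by ring]; exact e3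
    have f2 : (2 : ℝ) ^ (2 * (((k : ℕ) : ℤ) + 1) - 2) = 2 ^ (k : ℤ) * 2 ^ (k : ℤ) := by
      rw [show 2 * (((k : ℕ) : ℤ) + 1) - 2 = 2 * (k : ℤ) by ring]; exact h2k
    have f3 : (2 : ℝ) ^ (((k : ℕ) : ℤ) + 1 - 1) = 2 ^ (k : ℤ) := by
      rw [show ((k : ℕ) : ℤ) + 1 - 1 = (k : ℤ) by ring]
    have f4 : (8 : ℝ) ^ (-(((k : ℕ) : ℤ) + 1 - 1)) =
        1 / (2 ^ (k : ℤ) * 2 ^ (k : ℤ) * 2 ^ (k : ℤ)) := by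
      rw [show -(((k : ℕ) : ℤ) + 1 - 1) = -(k : ℤ) by ring, zpow_neg, h8k, inv_eq_one_div]
    have hz : ∀ j, 2 ≤ j → a (k + 1) j = 0 := by
      intro j hj
      have h := hrec (k + 1) hk2 j (by omega)
      rw [hs] at h
      rw [h, ih2 _ (by omega), ih2 _ (by omega), ih2 _ (by omega),
        ih2 _ (by omega), ih2 _ (by omega)]
      ring
    refine ⟨?_, ?_, hz⟩
    · rw [h0, ih0, ih1, ih2 2 le_rfl]
      push_cast
      rw [e1, e2, e3, e4, f1, f2, f3, f4]
      field_simp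
      ring
    · rw [h1, ih0, ih1, ih2 2 le_rfl, ih2 3 (by omega), ih2 4 (by omega)]
      push_cast
      rw [e1, e2, e3, e4, f1, f2, f3, f4]
      field_simp
      ring
end

section
/- With C_k = 2^{k-2}(2^{2k-2}-1)/3, and real numbers a_0, a_1 satisfying a_0 ≥ 2|a_1|, a_0 > 0, define the ratio ρ_k = (6C_k + 2^{k-1})(a_0 + 2a_1) / [(2C_k + 2^{k-1})(a_0 + 2a_1) - 2^{k+1} a_1]. Then: (i) if a_0 + 2a_1 = 0 then ρ_k = 0 for all k ≥ 1; (ii) if a_1 ≤ 0 then ρ_k < 3 for all k ≥ 1; (iii) if a_1 > 0 then ρ_k ≤ 4 for all k ≥ 2, and ρ_1 = (a_0 + 2a_1)/(a_0 - 2a_1). -/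
/-- Bounds for the ratio `ρ_k = μ₂/μ₁` of the coefficients in the decomposition of the
Galerkin-coarsened tridiagonal Toeplitz matrix, where
`ρ_k = (6C_k + 2^{k-1})(a₀ + 2a₁) / [(2C_k + 2^{k-1})(a₀ + 2a₁) - 2^{k+1}a₁]` and
`C_k = 2^{k-2}(2^{2k-2}-1)/3`, for `a₀ ≥ 2|a₁|`, `a₀ > 0`:
(i) if `a₀ + 2a₁ = 0` then `ρ_k = 0` for all `k ≥ 1`;
(ii) if `a₁ ≤ 0` then `ρ_k < 3` for all `k ≥ 1`;
(iii) if `a₁ > 0` then `ρ_k ≤ 4` for all `k ≥ 2`, and `ρ₁ = (a₀+2a₁)/(a₀-2a₁)`. -/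
theorem coarsening_ratio_bounds (a0 a1 : ℝ) (ha0 : 2 * |a1| ≤ a0) (ha0pos : 0 < a0)
    (C ρ : ℕ → ℝ)
    (hC : ∀ k, C k = (2 : ℝ) ^ ((k : ℤ) - 2) * ((2 : ℝ) ^ (2 * (k : ℤ) - 2) - 1) / 3)
    (hρ : ∀ k, ρ k = (6 * C k + (2 : ℝ) ^ ((k : ℤ) - 1)) * (a0 + 2 * a1) /
      ((2 * C k + (2 : ℝ) ^ ((k : ℤ) - 1)) * (a0 + 2 * a1) - (2 : ℝ) ^ ((k : ℤ) + 1) * a1)) :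
    (a0 + 2 * a1 = 0 → ∀ k : ℕ, 1 ≤ k → ρ k = 0) ∧
      (a1 ≤ 0 → ∀ k : ℕ, 1 ≤ k → ρ k < 3) ∧
      (0 < a1 → (∀ k : ℕ, 2 ≤ k → ρ k ≤ 4) ∧ ρ 1 = (a0 + 2 * a1) / (a0 - 2 * a1)) := by
  have hform : ∀ k : ℕ, ρ k = ((2:ℝ)^((k:ℤ)-1))^3*(a0+2*a1) /
      ((((2:ℝ)^((k:ℤ)-1))^3+2*(2:ℝ)^((k:ℤ)-1))/3*(a0+2*a1) - 4*(2:ℝ)^((k:ℤ)-1)*a1) := by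
    intro k
    have h1 : (2:ℝ)^((k:ℤ)-2) = (2:ℝ)^((k:ℤ)-1) / 2 := by
      rw [show (k:ℤ)-2 = ((k:ℤ)-1) + (-1) by ring, zpow_add₀ (two_ne_zero)]
      simp [zpow_neg]
      ring
    have h2 : (2:ℝ)^(2*(k:ℤ)-2) = ((2:ℝ)^((k:ℤ)-1))^2 := by
      rw [show 2*(k:ℤ)-2 = ((k:ℤ)-1)*2 by ring, zpow_mul, zpow_two, sq]
    have h3 : (2:ℝ)^((k:ℤ)+1) = 4 * (2:ℝ)^((k:ℤ)-1) := by
      rw [show (k:ℤ)+1 = ((k:ℤ)-1) + 2 by ring, zpow_add₀ (two_ne_zero)]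
      ring
    rw [hρ, hC, h1, h2, h3]
    ring
  refine ⟨?_, ?_, ?_⟩
  · intro h k _
    rw [hform k, h]
    simp
  · intro h1 k hk
    obtain ⟨j, rfl⟩ : ∃ j, k = j + 1 := ⟨k - 1, by omega⟩
    have hek : ((j+1 : ℕ) : ℤ) - 1 = (j : ℤ) := by push_cast; ring
    have hpe : (2:ℝ)^(((j+1:ℕ) : ℤ)-1) = (2:ℝ)^(j:ℕ) := by
      rw [hek, zpow_natCast]
    rw [hform, hpe]
    set p : ℝ := (2:ℝ)^(j:ℕ) with hpdef
    have hp0 : 0 < p := by positivity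
    have hp1 : (1:ℝ) ≤ p := one_le_pow₀ (by norm_num)
    have hs : 0 ≤ a0 + 2*a1 := by
      have := neg_le_abs a1
      nlinarith
    rcases eq_or_lt_of_le hs with hse | hsp
    · rw [← hse]
      simp
    · have hD : 0 < (p^3+2*p)/3*(a0+2*a1) - 4*p*a1 := by
        have h4 : 4*p*a1 ≤ 0 := by
          apply mul_nonpos_of_nonneg_of_nonpos (by positivity) h1
        nlinarith [pow_pos hp0 3]
      rw [div_lt_iff₀ hD]
      nlinarith [mul_pos hp0 hsp, mul_nonneg hp0.le (neg_nonneg.mpr h1)]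
  · intro ha1
    constructor
    · intro k hk
      obtain ⟨j, rfl⟩ : ∃ j, k = j + 2 := ⟨k - 2, by omega⟩
      have hpe : (2:ℝ)^(((j+2:ℕ) : ℤ)-1) = (2:ℝ)^(j+1:ℕ) := by
        rw [show ((j+2:ℕ) : ℤ)-1 = ((j+1 : ℕ) : ℤ) by push_cast; ring, zpow_natCast]
      rw [hform, hpe]
      set p : ℝ := (2:ℝ)^(j+1:ℕ) with hpdef
      have hp0 : 0 < p := by positivity
      have hp2 : (2:ℝ) ≤ p := by
        calc (2:ℝ) = 2^1 := by norm_num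
        _ ≤ 2^(j+1) := by
          apply pow_le_pow_right₀ (by norm_num)
          omega
      have habs : |a1| = a1 := abs_of_pos ha1
      have hs4 : 4*a1 ≤ a0 + 2*a1 := by rw [habs] at ha0; linarith
      have hsp : 0 < a0 + 2*a1 := by linarith
      have hD : 0 < (p^3+2*p)/3*(a0+2*a1) - 4*p*a1 := by
        nlinarith [mul_pos (show (0:ℝ) < p^3 - p by nlinarith [mul_le_mul_of_nonneg_right hp2 (sq_nonneg p), mul_le_mul_of_nonneg_right hp2 hp0.le]) hsp,
          mul_le_mul_of_nonneg_left hs4 hp0.le]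
      rw [div_le_iff₀ hD]
      nlinarith [mul_pos hp0 ha1, mul_le_mul_of_nonneg_left hs4 hp0.le,
        mul_le_mul_of_nonneg_left hs4 (mul_nonneg (mul_nonneg hp0.le hp0.le) hp0.le),
        mul_pos (mul_pos hp0 hp0) (mul_pos hp0 ha1),
        mul_nonneg (mul_nonneg hp0.le (by nlinarith : (0:ℝ) ≤ p^2 - 4)) ha1.le]
    · rw [hform 1]
      norm_num
      rw [show a0 + 2*a1 - 4*a1 = a0 - 2*a1 by ring]
end

section
/- Let L = tridiag(-1,2,-1) be M×M and I the M×M identity. For any real coefficients a > 0, b ≥ 0 and any vector v ∈ ℝ^{M²}, ‖(a I⊗I + b(I⊗L + L⊗I)) v‖² ≥ (a²/32 + ab/2 + b²) ((I⊗L² + L²⊗I) v, v). -/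
/-!
Write `S = I⊗L + L⊗I` and `K = I⊗L² + L²⊗I`. In the Loewner order, `0 ≤ L ≤ 4` gives
`L² ≤ 4L` (as `4L - L² = L(4 - L)` is a product of commuting positive operators) and
`L² ≤ 16`; passing to Kronecker sums, `K ≤ 4S` and `K ≤ 32`. Since `S² = K + 2 L⊗L ≥ K`,
expanding `(a + bS)² = a² + 2ab S + b² S²` bounds it below by `(a²/32 + ab/2 + b²) K`.
The bounds `0 ≤ L ≤ 4` for `L = tridiag(-1,2,-1)` come from the factorisations
`tridiag(c, 1 + c²) = DᵀD` with `D` bidiagonal, for `c = -1` and `c = 1`.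
-/

open Kronecker Matrix

/-- `tridiag M b a` is the `M × M` symmetric tridiagonal Toeplitz matrix. -/
def tridiag (M : ℕ) (b a : ℝ) : Matrix (Fin M) (Fin M) ℝ :=
  fun i j =>
    if (i : ℕ) = j then a
    else if (i : ℕ) + 1 = j ∨ (j : ℕ) + 1 = i then b else 0

open scoped MatrixOrder

section OperatorInequalities

variable {A : Type*} [Ring A] [PartialOrder A] [StarRing A] [StarOrderedRing A]
  [TopologicalSpace A] [Algebra ℝ A] [ContinuousFunctionalCalculus ℝ A IsSelfAdjoint]
  [NonnegSpectrumClass ℝ A] {a : A} {r : ℝ}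

theorem mul_self_le_smul_self_of_le_smul_one (ha : 0 ≤ a) (har : a ≤ r • 1) :
    a * a ≤ r • a := by
  have h : 0 ≤ a * (r • 1 - a) :=
    Commute.mul_nonneg ha (sub_nonneg.2 har)
      (((Commute.one_right a).smul_right r).sub_right (.refl a))
  rwa [mul_sub, mul_smul_comm, mul_one, sub_nonneg] at h

theorem mul_self_le_sq_smul_one_of_le_smul_one (ha : 0 ≤ a) (har : a ≤ r • 1) :
    a * a ≤ r ^ 2 • (1 : A) := by
  have hsq : 0 ≤ (r • 1 - a) * (r • 1 - a) :=
    (IsSelfAdjoint.of_nonneg (sub_nonneg.2 har)).mul_self_nonneg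
  have hlin := sub_nonneg.2 (mul_self_le_smul_self_of_le_smul_one ha har)
  -- `r² - a² = (r - a)² + 2 (r a - a²)`
  rw [← sub_nonneg]
  convert add_nonneg hsq (add_nonneg hlin hlin) using 1
  simp only [sub_mul, mul_sub, smul_mul_assoc, mul_smul_comm, one_mul, mul_one]
  module

end OperatorInequalities

namespace Matrix

variable {n : Type*}

def kroneckerSum {R : Type*} [Semiring R] [DecidableEq n] (A : Matrix n n R) :
    Matrix (n × n) (n × n) R :=
  1 ⊗ₖ A + A ⊗ₖ 1

section CommRing

variable {R : Type*} [CommRing R] [DecidableEq n]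

theorem kroneckerSum_mul_self [Fintype n] (A : Matrix n n R) :
    kroneckerSum A * kroneckerSum A = kroneckerSum (A * A) + (2 : R) • A ⊗ₖ A := by
  simp only [kroneckerSum, Matrix.add_mul, Matrix.mul_add, ← mul_kronecker_mul,
    Matrix.one_mul, Matrix.mul_one, two_smul]
  abel

theorem kroneckerSum_smul (r : R) (A : Matrix n n R) :
    kroneckerSum (r • A) = r • kroneckerSum A := by
  simp only [kroneckerSum, kronecker_smul, smul_kronecker, smul_add]

theorem kroneckerSum_one : kroneckerSum (1 : Matrix n n R) = (2 : R) • 1 := by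
  rw [kroneckerSum, one_kronecker_one, two_smul]

theorem kroneckerSum_sub (A B : Matrix n n R) :
    kroneckerSum (A - B) = kroneckerSum A - kroneckerSum B := by
  ext i j
  simp only [kroneckerSum, add_apply, sub_apply, kroneckerMap_apply, mul_sub, sub_mul]
  ring

end CommRing

variable [Fintype n]

theorem dotProduct_mulVec_mono {A B : Matrix n n ℝ} (h : A ≤ B) (v : n → ℝ) :
    (A *ᵥ v) ⬝ᵥ v ≤ (B *ᵥ v) ⬝ᵥ v := by
  have := (sub_nonneg.2 h).posSemidef.dotProduct_mulVec_nonneg v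
  rw [star_trivial, sub_mulVec, dotProduct_sub, sub_nonneg] at this
  simpa only [dotProduct_comm v] using this

theorem mulVec_dotProduct_mulVec_self {P : Matrix n n ℝ} (hP : P.IsHermitian) (v : n → ℝ) :
    (P *ᵥ v) ⬝ᵥ (P *ᵥ v) = ((P * P) *ᵥ v) ⬝ᵥ v := by
  rw [dotProduct_mulVec, ← mulVec_transpose, ← conjTranspose_eq_transpose_of_trivial, hP,
    mulVec_mulVec]

variable [DecidableEq n]

theorem kroneckerSum_nonneg {A : Matrix n n ℝ} (hA : 0 ≤ A) : 0 ≤ kroneckerSum A :=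
  ((PosSemidef.one.kronecker hA.posSemidef).add (hA.posSemidef.kronecker .one)).nonneg

theorem kroneckerSum_mono {A B : Matrix n n ℝ} (h : A ≤ B) :
    kroneckerSum A ≤ kroneckerSum B := by
  rw [← sub_nonneg, ← kroneckerSum_sub]
  exact kroneckerSum_nonneg (sub_nonneg.2 h)

theorem smul_kroneckerSum_mul_self_le_sq {L : Matrix n n ℝ} {r : ℝ} (hr : 0 < r) (hL : 0 ≤ L)
    (hLr : L ≤ r • 1) {a b : ℝ} (ha : 0 ≤ a) (hb : 0 ≤ b) :
    (a ^ 2 / (2 * r ^ 2) + 2 * a * b / r + b ^ 2) • kroneckerSum (L * L) ≤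
      (a • 1 + b • kroneckerSum L) * (a • 1 + b • kroneckerSum L) := by
  set S := kroneckerSum L
  set K := kroneckerSum (L * L)
  have hK_one : K ≤ (2 * r ^ 2) • 1 := by
    simpa only [kroneckerSum_smul, kroneckerSum_one, smul_smul, mul_comm]
      using kroneckerSum_mono (mul_self_le_sq_smul_one_of_le_smul_one hL hLr)
  have hK_S : K ≤ r • S := by
    simpa only [kroneckerSum_smul]
      using kroneckerSum_mono (mul_self_le_smul_self_of_le_smul_one hL hLr)
  have hK_SS : K ≤ S * S := by
    rw [kroneckerSum_mul_self]
    exact le_add_of_nonneg_right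
      (smul_nonneg zero_le_two (hL.posSemidef.kronecker hL.posSemidef).nonneg)
  calc (a ^ 2 / (2 * r ^ 2) + 2 * a * b / r + b ^ 2) • K
      = (a ^ 2 / (2 * r ^ 2)) • K + (2 * a * b / r) • K + b ^ 2 • K := by
        simp only [add_smul]
    _ ≤ (a ^ 2 / (2 * r ^ 2)) • ((2 * r ^ 2) • 1) + (2 * a * b / r) • (r • S) +
        b ^ 2 • (S * S) := by
      gcongr
    _ = (a • 1 + b • S) * (a • 1 + b • S) := by
      simp only [smul_smul, Matrix.add_mul, Matrix.mul_add, smul_mul_smul, Matrix.one_mul,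
        Matrix.mul_one]
      match_scalars
      · field_simp
      · field_simp
        ring
      · ring

theorem smul_dotProduct_kroneckerSum_le {L : Matrix n n ℝ} {r : ℝ} (hr : 0 < r) (hL : 0 ≤ L)
    (hLr : L ≤ r • 1) {a b : ℝ} (ha : 0 ≤ a) (hb : 0 ≤ b) (v : n × n → ℝ) :
    (a ^ 2 / (2 * r ^ 2) + 2 * a * b / r + b ^ 2) * ((kroneckerSum (L * L) *ᵥ v) ⬝ᵥ v) ≤
      ((a • 1 + b • kroneckerSum L) *ᵥ v) ⬝ᵥ ((a • 1 + b • kroneckerSum L) *ᵥ v) := by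
  have hP : 0 ≤ a • (1 : Matrix (n × n) (n × n) ℝ) + b • kroneckerSum L :=
    add_nonneg (smul_nonneg ha PosSemidef.one.nonneg) (smul_nonneg hb (kroneckerSum_nonneg hL))
  rw [mulVec_dotProduct_mulVec_self hP.posSemidef.isHermitian, ← smul_eq_mul,
    ← smul_dotProduct, ← smul_mulVec]
  exact dotProduct_mulVec_mono (smul_kroneckerSum_mul_self_le_sq hr hL hLr ha hb) v

end Matrix

def bidiag (M : ℕ) (c : ℝ) : Matrix (Fin (M + 1)) (Fin M) ℝ :=
  fun i j => if (i : ℕ) = j then 1 else if (j : ℕ) + 1 = i then c else 0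

theorem bidiag_transpose_mul_self (M : ℕ) (c : ℝ) :
    (bidiag M c)ᵀ * bidiag M c = tridiag M c (1 + c ^ 2) := by
  ext j k
  rw [mul_apply, Fintype.sum_eq_add j.castSucc j.succ (by simp [Fin.ext_iff])]
  · simp only [transpose_apply, bidiag, tridiag, Fin.val_castSucc, Fin.val_succ]
    split_ifs <;> first | (exfalso; omega) | ring
  · rintro i ⟨hij, hij'⟩
    have h1 : (i : ℕ) ≠ j := fun h => hij (Fin.ext h)
    have h2 : (j : ℕ) + 1 ≠ i := fun h => hij' (Fin.ext h.symm)
    simp [bidiag, h1, h2]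

theorem tridiag_nonneg (M : ℕ) (c : ℝ) : 0 ≤ tridiag M c (1 + c ^ 2) := by
  rw [← bidiag_transpose_mul_self, ← conjTranspose_eq_transpose_of_trivial]
  exact (posSemidef_conjTranspose_mul_self _).nonneg

theorem smul_one_sub_tridiag (M : ℕ) (r b a : ℝ) :
    r • 1 - tridiag M b a = tridiag M (-b) (r - a) := by
  ext i j
  simp only [Matrix.sub_apply, Matrix.smul_apply, one_apply, Fin.ext_iff, tridiag, smul_eq_mul]
  split_ifs <;> ring

theorem laplacian_nonneg (M : ℕ) : 0 ≤ tridiag M (-1) 2 := by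
  simpa [one_add_one_eq_two] using tridiag_nonneg M (-1)

theorem laplacian_le_four (M : ℕ) : tridiag M (-1) 2 ≤ (4 : ℝ) • 1 := by
  rw [← sub_nonneg, smul_one_sub_tridiag]
  convert tridiag_nonneg M 1 using 2 <;> norm_num

/-- With `L = tridiag(-1,2,-1)` the `M × M` discrete Laplacian, for any `a > 0`, `b ≥ 0`
and any `v ∈ ℝ^{M²}`:
`‖(a I⊗I + b(I⊗L + L⊗I))v‖² ≥ (a²/32 + ab/2 + b²)((I⊗L² + L²⊗I)v, v)`. -/
theorem twoD_lower_bound (M : ℕ) (a b : ℝ) (ha : 0 < a) (hb : 0 ≤ b)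
    (v : Fin M × Fin M → ℝ) :
    let L := tridiag M (-1) 2
    let I1 : Matrix (Fin M) (Fin M) ℝ := 1
    (a ^ 2 / 32 + a * b / 2 + b ^ 2) * (((I1 ⊗ₖ (L * L) + (L * L) ⊗ₖ I1) *ᵥ v) ⬝ᵥ v) ≤
      ((a • (I1 ⊗ₖ I1) + b • (I1 ⊗ₖ L + L ⊗ₖ I1)) *ᵥ v) ⬝ᵥ
        ((a • (I1 ⊗ₖ I1) + b • (I1 ⊗ₖ L + L ⊗ₖ I1)) *ᵥ v) := by
  intro L I1
  have hcoeff : a ^ 2 / 32 + a * b / 2 + b ^ 2 = a ^ 2 / (2 * 4 ^ 2) + 2 * a * b / 4 + b ^ 2 := by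
    ring
  rw [hcoeff, one_kronecker_one]
  exact smul_dotProduct_kroneckerSum_le four_pos (laplacian_nonneg M) (laplacian_le_four M)
    ha.le hb v
end

section
/- Suppose the symmetric positive definite matrices A_k (k = 1,…,K) and smoothers S_k = ωD_k^{-1} satisfy: (i) (ω/λ_max(A_k))(v,v) ≤ (S_k v, v) ≤ (A_k^{-1} v, v) for all v, and (ii) ‖T^k v‖²_{A_k} ≤ m_0 ‖A_k v‖²_{D_k^{-1}} for all v, where T^k is the Galerkin coarse-grid correction. Then the V-cycle operator B_k with l pre- and post-smoothing steps satisfies ‖I - B_k A_k‖_{A_k} ≤ m_0/(2lω + m_0) < 1 for all 1 ≤ k ≤ K. -/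
/-!
By induction on `k`, the error `E_k = I - B_k A_k` satisfies `0 ≤ A_k E_k ≤ δ A_k` with
`δ = m₀ / (2lω + m₀)`; as `A_k E_k` is symmetric, Cauchy–Schwarz for its form turns this into
`‖E_k v‖²_{A_k} ≤ δ² ‖v‖²_{A_k}`.

For the step, `E_{k+1} = K^l (I - P B_k R A) K^l` with `K = I - S A`, so with `w = K^l v` the
form of `A E_{k+1}` at `v` is that of `A (I - P B_k R A)` at `w`. The Galerkin relation makes
`Π = P A_k⁻¹ R A` an `A`-orthogonal projection, so with `z = A_k⁻¹ R A w` this form is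
`‖(I - Π) w‖²_A + 2 (A_k E_k z, z)`, while `‖w‖²_A = ‖(I - Π) w‖²_A + 2 ‖z‖²_{A_k}`.
The approximation property bounds `‖(I - Π) w‖²_A` by `(m₀/ω) (S A w, A w)`, and the smoothing
property `2l (S A w, A w) ≤ ‖v‖²_A - ‖w‖²_A` pays for it; `δ` is the weight balancing the two.

The smoothing property follows from
`1 - (1 - x)ⁿ = n x (1 - x)ⁿ + ∑_{m<n} (m + 1) x² (1 - x)^m` at `x = T = S A`: `A T² (I - T)^m` is
`Mᵀ A M` or `Mᵀ A (I - T) M` with `M = T (I - T)^⌊m/2⌋`, and `A (I - T) ≥ 0` is exactly `S ≤ A⁻¹`.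
-/

open Matrix

/-- The V-cycle multigrid operator `B_k` (as an approximate inverse of `A_k`), with exact
solve on the coarsest level `0`, damped Jacobi smoother `S_k = ω D_k⁻¹` applied `l` times
before and after coarse-grid correction, prolongations `P k` and restrictions
`(1/2)(P k)ᵀ`.  It is characterized by `B 0 = A 0⁻¹` and the error-propagation identity
`I - B_{k+1} A_{k+1} = K^l (I - P B_k R A_{k+1}) K^l` with `K = I - S A_{k+1}`. -/
noncomputable def vcycleB (dim : ℕ → ℕ) (A : ∀ k, Matrix (Fin (dim k)) (Fin (dim k)) ℝ)
    (P : ∀ k, Matrix (Fin (dim (k + 1))) (Fin (dim k)) ℝ) (ω : ℝ) (l : ℕ) :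
    ∀ k, Matrix (Fin (dim k)) (Fin (dim k)) ℝ
  | 0 => (A 0)⁻¹
  | k + 1 =>
      let Smat : Matrix (Fin (dim (k + 1))) (Fin (dim (k + 1))) ℝ :=
        ω • (Matrix.diagonal fun i => (A (k + 1) i i)⁻¹)
      let Ksm : Matrix (Fin (dim (k + 1))) (Fin (dim (k + 1))) ℝ := 1 - Smat * A (k + 1)
      (1 - Ksm ^ l *
          (1 - P k * vcycleB dim A P ω l k * ((1 / 2 : ℝ) • (P k)ᵀ) * A (k + 1)) *
          Ksm ^ l) * (A (k + 1))⁻¹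

open Polynomial Finset

section QuadraticForm

variable {m n : Type*} [Fintype m] [Fintype n]

theorem transpose_mul_mul_mulVec_dotProduct (X : Matrix m n ℝ) (Y : Matrix m m ℝ) (v : n → ℝ) :
    ((Xᵀ * Y * X) *ᵥ v) ⬝ᵥ v = (Y *ᵥ (X *ᵥ v)) ⬝ᵥ (X *ᵥ v) := by
  rw [Matrix.mul_assoc, ← mulVec_mulVec, ← mulVec_mulVec, dotProduct_comm,
    dotProduct_mulVec, vecMul_transpose, dotProduct_comm]

theorem mulVec_dotProduct_comm {M : Matrix n n ℝ} (hM : Mᵀ = M) (u w : n → ℝ) :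
    (M *ᵥ u) ⬝ᵥ w = (M *ᵥ w) ⬝ᵥ u := by
  rw [dotProduct_comm, dotProduct_mulVec, ← mulVec_transpose, hM]

theorem sq_mulVec_dotProduct_le {M : Matrix n n ℝ} (hM : Mᵀ = M)
    (hM₀ : ∀ v, 0 ≤ (M *ᵥ v) ⬝ᵥ v) (u w : n → ℝ) :
    ((M *ᵥ u) ⬝ᵥ w) ^ 2 ≤ ((M *ᵥ u) ⬝ᵥ u) * ((M *ᵥ w) ⬝ᵥ w) := by
  have hquad : ∀ t : ℝ, 0 ≤ ((M *ᵥ w) ⬝ᵥ w) * (t * t) + 2 * ((M *ᵥ u) ⬝ᵥ w) * t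
      + (M *ᵥ u) ⬝ᵥ u := fun t => by
    have h := hM₀ (u + t • w)
    simp only [mulVec_add, mulVec_smul, add_dotProduct, smul_dotProduct, dotProduct_add,
      dotProduct_smul, smul_eq_mul, mulVec_dotProduct_comm hM w u] at h
    linarith
  have := discrim_le_zero hquad
  rw [discrim] at this
  linarith

theorem mul_mul_mulVec_dotProduct {A : Matrix n n ℝ} (hA : Aᵀ = A) (S : Matrix n n ℝ)
    (x : n → ℝ) :
    ((A * (S * A)) *ᵥ x) ⬝ᵥ x = (S *ᵥ (A *ᵥ x)) ⬝ᵥ (A *ᵥ x) := by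
  rw [← transpose_mul_mul_mulVec_dotProduct, hA, Matrix.mul_assoc]

theorem mul_mul_eq_transpose_mul {A S : Matrix n n ℝ} (hA : Aᵀ = A) (hS : Sᵀ = S) :
    A * (S * A) = (S * A)ᵀ * A := by
  rw [transpose_mul, hA, hS, Matrix.mul_assoc]

omit [Fintype n] in
theorem Matrix.PosDef.transpose_eq {A : Matrix n n ℝ} (hA : A.PosDef) : Aᵀ = A := by
  rw [← conjTranspose_eq_transpose_of_trivial]
  exact hA.1

theorem Matrix.PosDef.isUnit_det [DecidableEq n] {A : Matrix n n ℝ} (hA : A.PosDef) :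
    IsUnit A.det :=
  hA.det_pos.ne'.isUnit

theorem Matrix.PosDef.mulVec_dotProduct_nonneg {A : Matrix n n ℝ} (hA : A.PosDef) (v : n → ℝ) :
    0 ≤ (A *ᵥ v) ⬝ᵥ v := by
  simpa [dotProduct_comm] using hA.posSemidef.dotProduct_mulVec_nonneg v

end QuadraticForm

theorem one_sub_one_sub_pow_eq {R : Type*} [CommRing R] (x : R) (n : ℕ) :
    1 - (1 - x) ^ n = n • (x * (1 - x) ^ n) + ∑ m ∈ range n, (m + 1) • (x ^ 2 * (1 - x) ^ m) := by
  induction n with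
  | zero => simp
  | succ n ih =>
    rw [sum_range_succ]
    simp only [nsmul_eq_mul] at ih ⊢
    push_cast at ih ⊢
    linear_combination ih

section Smoothing

variable {n : Type*} [Fintype n] [DecidableEq n] {A T : Matrix n n ℝ}

theorem mul_aeval_eq_transpose_mul (hAT : A * T = Tᵀ * A) (p : ℝ[X]) :
    A * aeval T p = (aeval T p)ᵀ * A := by
  have hpow : ∀ j : ℕ, A * T ^ j = (T ^ j)ᵀ * A := by
    intro j
    induction j with
    | zero => simp
    | succ j ih =>
      rw [pow_succ, ← Matrix.mul_assoc, ih, Matrix.mul_assoc, hAT, ← Matrix.mul_assoc,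
        ← transpose_mul, ← pow_succ', pow_succ]
  simp only [aeval_eq_sum_range, Matrix.mul_sum, Matrix.mul_smul, hpow, transpose_sum,
    transpose_smul, Matrix.sum_mul, Matrix.smul_mul]

variable (A T) in
noncomputable def polyQuadForm (v : n → ℝ) : ℝ[X] →ₗ[ℝ] ℝ where
  toFun p := ((A * aeval T p) *ᵥ v) ⬝ᵥ v
  map_add' p q := by simp only [map_add, Matrix.mul_add, add_mulVec, add_dotProduct]
  map_smul' c p := by
    simp only [map_smul, Matrix.mul_smul, smul_mulVec, smul_dotProduct, RingHom.id_apply]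

theorem polyQuadForm_apply (v : n → ℝ) (p : ℝ[X]) :
    polyQuadForm A T v p = ((A * aeval T p) *ᵥ v) ⬝ᵥ v := rfl

theorem polyQuadForm_aeval_mulVec (hAT : A * T = Tᵀ * A) (r p : ℝ[X]) (v : n → ℝ) :
    polyQuadForm A T (aeval T r *ᵥ v) p = polyQuadForm A T v (r * p * r) := by
  rw [polyQuadForm_apply, polyQuadForm_apply, ← transpose_mul_mul_mulVec_dotProduct,
    ← Matrix.mul_assoc, ← mul_aeval_eq_transpose_mul hAT, map_mul, map_mul]
  simp only [Matrix.mul_assoc]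

theorem polyQuadForm_X_sq_mul_nonneg (hAT : A * T = Tᵀ * A) (hA : ∀ v, 0 ≤ (A *ᵥ v) ⬝ᵥ v)
    (hAT₁ : ∀ v, 0 ≤ ((A * (1 - T)) *ᵥ v) ⬝ᵥ v) (m : ℕ) (v : n → ℝ) :
    0 ≤ polyQuadForm A T v (X ^ 2 * (1 - X) ^ m) := by
  obtain ⟨r, rfl | rfl⟩ := Nat.even_or_odd' m
  · have h := polyQuadForm_aeval_mulVec hAT (X * (1 - X) ^ r) 1 v
    rw [show X * (1 - X) ^ r * 1 * (X * (1 - X) ^ r) = (X ^ 2 * (1 - X) ^ (2 * r) : ℝ[X]) by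
      ring] at h
    rw [← h, polyQuadForm_apply, map_one, Matrix.mul_one]
    exact hA _
  · have h := polyQuadForm_aeval_mulVec hAT (X * (1 - X) ^ r) (1 - X) v
    rw [show X * (1 - X) ^ r * (1 - X) * (X * (1 - X) ^ r) =
      (X ^ 2 * (1 - X) ^ (2 * r + 1) : ℝ[X]) by ring] at h
    rw [← h, polyQuadForm_apply, map_sub, map_one, aeval_X]
    exact hAT₁ _

theorem nsmul_polyQuadForm_le (hAT : A * T = Tᵀ * A) (hA : ∀ v, 0 ≤ (A *ᵥ v) ⬝ᵥ v)
    (hAT₁ : ∀ v, 0 ≤ ((A * (1 - T)) *ᵥ v) ⬝ᵥ v) (k : ℕ) (v : n → ℝ) :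
    k • polyQuadForm A T v (X * (1 - X) ^ k) ≤ polyQuadForm A T v (1 - (1 - X) ^ k) := by
  rw [one_sub_one_sub_pow_eq, map_add, map_nsmul, map_sum, le_add_iff_nonneg_right]
  refine sum_nonneg fun m _ => ?_
  rw [map_nsmul]
  exact nsmul_nonneg (polyQuadForm_X_sq_mul_nonneg hAT hA hAT₁ m v) _

theorem smoothing_property (hAT : A * T = Tᵀ * A) (hA : ∀ v, 0 ≤ (A *ᵥ v) ⬝ᵥ v)
    (hAT₁ : ∀ v, 0 ≤ ((A * (1 - T)) *ᵥ v) ⬝ᵥ v) (l : ℕ) (v : n → ℝ) :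
    2 * l * (((A * T) *ᵥ ((1 - T) ^ l *ᵥ v)) ⬝ᵥ ((1 - T) ^ l *ᵥ v)) ≤
      (A *ᵥ v) ⬝ᵥ v - (A *ᵥ ((1 - T) ^ l *ᵥ v)) ⬝ᵥ ((1 - T) ^ l *ᵥ v) := by
  have hK : (1 - T) ^ l = aeval T ((1 - X : ℝ[X]) ^ l) := by simp
  have hform : ∀ p : ℝ[X], ((A * aeval T p) *ᵥ ((1 - T) ^ l *ᵥ v)) ⬝ᵥ ((1 - T) ^ l *ᵥ v) =
      polyQuadForm A T v ((1 - X : ℝ[X]) ^ (2 * l) * p) := fun p => by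
    rw [hK, ← polyQuadForm_apply, polyQuadForm_aeval_mulVec hAT]
    ring_nf
  have h := nsmul_polyQuadForm_le hAT hA hAT₁ (2 * l) v
  have hX := hform X
  have h1 := hform 1
  rw [aeval_X] at hX
  rw [map_one, Matrix.mul_one] at h1
  rw [hX, h1, mul_one, mul_comm _ X]
  rw [map_sub, nsmul_eq_mul, polyQuadForm_apply (A := A) (T := T) v 1, map_one,
    Matrix.mul_one] at h
  push_cast at h
  linarith

end Smoothing

section Smoother

variable {n : Type*} [Fintype n] [DecidableEq n] {A S : Matrix n n ℝ}

theorem mul_one_sub_mul_pow (hA : Aᵀ = A) (hS : Sᵀ = S) (l : ℕ) :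
    A * (1 - S * A) ^ l = ((1 - S * A) ^ l)ᵀ * A := by
  have h := mul_aeval_eq_transpose_mul (mul_mul_eq_transpose_mul hA hS) ((1 - X : ℝ[X]) ^ l)
  rwa [map_pow, map_sub, map_one, aeval_X] at h

theorem smoothing_property_of_le_inv (hA : A.PosDef) (hS : Sᵀ = S)
    (hSA : ∀ y, (S *ᵥ y) ⬝ᵥ y ≤ (A⁻¹ *ᵥ y) ⬝ᵥ y) (l : ℕ) (v : n → ℝ) :
    2 * l * ((S *ᵥ (A *ᵥ ((1 - S * A) ^ l *ᵥ v))) ⬝ᵥ (A *ᵥ ((1 - S * A) ^ l *ᵥ v))) ≤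
      (A *ᵥ v) ⬝ᵥ v - (A *ᵥ ((1 - S * A) ^ l *ᵥ v)) ⬝ᵥ ((1 - S * A) ^ l *ᵥ v) := by
  have hAK : ∀ x, 0 ≤ ((A * (1 - S * A)) *ᵥ x) ⬝ᵥ x := fun x => by
    have hx : A⁻¹ *ᵥ (A *ᵥ x) = x := by
      rw [mulVec_mulVec, nonsing_inv_mul _ hA.isUnit_det, one_mulVec]
    have h := hSA (A *ᵥ x)
    rw [hx, dotProduct_comm x] at h
    rw [Matrix.mul_sub, Matrix.mul_one, sub_mulVec, sub_dotProduct,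
      mul_mul_mulVec_dotProduct hA.transpose_eq]
    linarith
  have h := smoothing_property (mul_mul_eq_transpose_mul hA.transpose_eq hS)
    hA.mulVec_dotProduct_nonneg hAK l v
  rwa [mul_mul_mulVec_dotProduct hA.transpose_eq] at h

end Smoother

section TwoLevel

variable {n₀ n₁ : Type*} [Fintype n₀] [DecidableEq n₀] [Fintype n₁] [DecidableEq n₁]
  {A₀ : Matrix n₀ n₀ ℝ} {A₁ : Matrix n₁ n₁ ℝ} {P : Matrix n₁ n₀ ℝ} {c : ℝ}

theorem transpose_one_sub_mul_mul_one_sub {G : Matrix n₀ n₁ ℝ} {d : ℝ} (hA₀ : A₀ᵀ = A₀)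
    (hA₁ : A₁ᵀ = A₁) (hGP : G * P = 1) (hAP : A₁ * P = d • (Gᵀ * A₀)) :
    (1 - P * G)ᵀ * A₁ * (1 - P * G) = A₁ - d • (Gᵀ * A₀ * G) := by
  have hAPG : A₁ * (P * G) = d • (Gᵀ * A₀ * G) := by
    rw [← Matrix.mul_assoc, hAP, Matrix.smul_mul]
  have hPGA : (P * G)ᵀ * A₁ = d • (Gᵀ * A₀ * G) := by
    rw [← hA₁, ← transpose_mul, hAPG, transpose_smul, transpose_mul, transpose_mul, hA₀,
      transpose_transpose, Matrix.mul_assoc]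
  have hPGAPG : (P * G)ᵀ * A₁ * (P * G) = d • (Gᵀ * A₀ * G) := by
    rw [hPGA, Matrix.smul_mul, Matrix.mul_assoc, Matrix.mul_assoc, ← Matrix.mul_assoc G,
      hGP, Matrix.one_mul, Matrix.mul_assoc]
  simp only [transpose_sub, transpose_one, Matrix.sub_mul, Matrix.mul_sub, Matrix.one_mul,
    Matrix.mul_one]
  rw [hPGAPG, hAPG, hPGA]
  abel

theorem mul_one_sub_prolong_mul_restrict_eq (hA₀ : A₀.PosDef) (hA₁ : A₁ᵀ = A₁) (hc : c ≠ 0)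
    (hGal : A₀ = (c • Pᵀ) * A₁ * P) (B₀ : Matrix n₀ n₀ ℝ) :
    A₁ * (1 - P * B₀ * (c • Pᵀ) * A₁) =
      (1 - P * A₀⁻¹ * (c • Pᵀ) * A₁)ᵀ * A₁ * (1 - P * A₀⁻¹ * (c • Pᵀ) * A₁) +
        c⁻¹ • ((A₀⁻¹ * (c • Pᵀ) * A₁)ᵀ * (A₀ * (1 - B₀ * A₀)) * (A₀⁻¹ * (c • Pᵀ) * A₁)) := by
  set G := A₀⁻¹ * (c • Pᵀ) * A₁ with hG
  have hinv : A₀⁻¹ * A₀ = 1 := nonsing_inv_mul _ hA₀.isUnit_det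
  have hinv' : A₀ * A₀⁻¹ = 1 := mul_nonsing_inv _ hA₀.isUnit_det
  have hPG : P * A₀⁻¹ * (c • Pᵀ) * A₁ = P * G := by simp only [hG, Matrix.mul_assoc]
  have hGP : G * P = 1 := by
    rw [hG, Matrix.mul_assoc A₀⁻¹, Matrix.mul_assoc A₀⁻¹, ← hGal, hinv]
  have hRA : (c • Pᵀ) * A₁ = A₀ * G := by
    rw [hG, ← Matrix.mul_assoc, ← Matrix.mul_assoc, hinv', Matrix.one_mul]
  clear_value G
  have hAP : A₁ * P = c⁻¹ • (Gᵀ * A₀) := by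
    have h := congrArg transpose hRA
    rw [transpose_mul, transpose_mul, transpose_smul, transpose_transpose, hA₁,
      hA₀.transpose_eq, Matrix.mul_smul] at h
    rw [← h, smul_smul, inv_mul_cancel₀ hc, one_smul]
  have hproj := transpose_one_sub_mul_mul_one_sub hA₀.transpose_eq hA₁ hGP hAP
  have hcoarse : A₁ * (1 - P * B₀ * (c • Pᵀ) * A₁) = A₁ - c⁻¹ • (Gᵀ * A₀ * B₀ * A₀ * G) := by
    rw [Matrix.mul_sub, Matrix.mul_one, Matrix.mul_assoc (P * B₀), hRA]
    simp only [← Matrix.mul_assoc]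
    rw [hAP]
    simp only [Matrix.smul_mul]
  rw [hPG, hproj, hcoarse]
  simp only [Matrix.mul_sub, Matrix.sub_mul, Matrix.mul_one, smul_sub, Matrix.mul_assoc]
  abel

theorem two_level_energy_eq (hA₀ : A₀.PosDef) (hA₁ : A₁ᵀ = A₁) (hc : c ≠ 0)
    (hGal : A₀ = (c • Pᵀ) * A₁ * P) (B₀ : Matrix n₀ n₀ ℝ) (w : n₁ → ℝ) :
    ((A₁ * (1 - P * B₀ * (c • Pᵀ) * A₁)) *ᵥ w) ⬝ᵥ w =
      (A₁ *ᵥ ((1 - P * A₀⁻¹ * (c • Pᵀ) * A₁) *ᵥ w)) ⬝ᵥ ((1 - P * A₀⁻¹ * (c • Pᵀ) * A₁) *ᵥ w) +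
        c⁻¹ * (((A₀ * (1 - B₀ * A₀)) *ᵥ ((A₀⁻¹ * (c • Pᵀ) * A₁) *ᵥ w)) ⬝ᵥ
          ((A₀⁻¹ * (c • Pᵀ) * A₁) *ᵥ w)) := by
  rw [mul_one_sub_prolong_mul_restrict_eq hA₀ hA₁ hc hGal, add_mulVec, add_dotProduct,
    smul_mulVec, smul_dotProduct, smul_eq_mul, transpose_mul_mul_mulVec_dotProduct,
    transpose_mul_mul_mulVec_dotProduct]

end TwoLevel

section ErrorBound

variable {n : Type*} [Fintype n] [DecidableEq n]

theorem transpose_eq_of_mul_mul_symm {A B : Matrix n n ℝ}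
    (hA : IsUnit A) (hAs : Aᵀ = A) (h : (A * B * A)ᵀ = A * B * A) : Bᵀ = B := by
  rw [transpose_mul, transpose_mul, hAs, ← Matrix.mul_assoc] at h
  exact hA.mul_left_cancel (hA.mul_right_cancel h)

/-- `I - B A` is `A`-self-adjoint with spectrum in `[0, δ]`: `B` is symmetric and
`0 ≤ A (I - B A) ≤ δ A` in the Loewner order. -/
structure IsErrorBound (A B : Matrix n n ℝ) (δ : ℝ) : Prop where
  symm : Bᵀ = B
  nonneg : ∀ v, 0 ≤ ((A * (1 - B * A)) *ᵥ v) ⬝ᵥ v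
  le : ∀ v, ((A * (1 - B * A)) *ᵥ v) ⬝ᵥ v ≤ δ * ((A *ᵥ v) ⬝ᵥ v)

theorem isErrorBound_inv {A : Matrix n n ℝ} (hA : A.PosDef) {δ : ℝ} (hδ : 0 ≤ δ) :
    IsErrorBound A A⁻¹ δ := by
  have hzero : A * (1 - A⁻¹ * A) = 0 := by
    rw [nonsing_inv_mul _ hA.isUnit_det, sub_self, Matrix.mul_zero]
  refine ⟨by rw [transpose_nonsing_inv, hA.transpose_eq], fun v => ?_, fun v => ?_⟩
  · simp [hzero]
  · simpa [hzero] using mul_nonneg hδ (hA.mulVec_dotProduct_nonneg v)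

theorem IsErrorBound.energy_le {A B : Matrix n n ℝ} {δ : ℝ} (h : IsErrorBound A B δ)
    (hA : A.PosDef) (hδ : 0 ≤ δ) (v : n → ℝ) :
    (A *ᵥ ((1 - B * A) *ᵥ v)) ⬝ᵥ ((1 - B * A) *ᵥ v) ≤ δ ^ 2 * ((A *ᵥ v) ⬝ᵥ v) := by
  have hM : (A * (1 - B * A))ᵀ = A * (1 - B * A) := by
    rw [Matrix.mul_sub, Matrix.mul_one, transpose_sub, transpose_mul, transpose_mul,
      hA.transpose_eq, h.symm, Matrix.mul_assoc]
  have hAE : A *ᵥ ((1 - B * A) *ᵥ v) = (A * (1 - B * A)) *ᵥ v := mulVec_mulVec _ _ _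
  obtain ⟨x, hx⟩ : ∃ x, (A *ᵥ ((1 - B * A) *ᵥ v)) ⬝ᵥ ((1 - B * A) *ᵥ v) = x := ⟨_, rfl⟩
  have hx₀ : 0 ≤ x := hx ▸ hA.mulVec_dotProduct_nonneg _
  have hx' : ((A * (1 - B * A)) *ᵥ v) ⬝ᵥ ((1 - B * A) *ᵥ v) = x := hAE ▸ hx
  have hsq : x ^ 2 ≤ (δ * ((A *ᵥ v) ⬝ᵥ v)) * (δ * x) := by
    have hcs := sq_mulVec_dotProduct_le hM h.nonneg v ((1 - B * A) *ᵥ v)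
    have hEv := h.le ((1 - B * A) *ᵥ v)
    rw [hx'] at hcs
    rw [hx] at hEv
    exact hcs.trans (mul_le_mul (h.le v) hEv (h.nonneg _)
      (mul_nonneg hδ (hA.mulVec_dotProduct_nonneg v)))
  rw [hx]
  rcases hx₀.eq_or_lt with rfl | hxpos
  · exact mul_nonneg (sq_nonneg δ) (hA.mulVec_dotProduct_nonneg v)
  · nlinarith

theorem IsErrorBound.vcycle_succ {n₀ n₁ : Type*} [Fintype n₀] [DecidableEq n₀] [Fintype n₁]
    [DecidableEq n₁] {A₀ B₀ : Matrix n₀ n₀ ℝ} {A₁ S : Matrix n₁ n₁ ℝ} {P : Matrix n₁ n₀ ℝ}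
    {c μ δ : ℝ} {l : ℕ} (h : IsErrorBound A₀ B₀ δ) (hA₀ : A₀.PosDef) (hA₁ : A₁.PosDef)
    (hc : 0 < c) (hGal : A₀ = (c • Pᵀ) * A₁ * P) (hS : Sᵀ = S)
    (hSA : ∀ y, (S *ᵥ y) ⬝ᵥ y ≤ (A₁⁻¹ *ᵥ y) ⬝ᵥ y)
    (happrox : ∀ w, (A₁ *ᵥ ((1 - P * A₀⁻¹ * (c • Pᵀ) * A₁) *ᵥ w)) ⬝ᵥ
        ((1 - P * A₀⁻¹ * (c • Pᵀ) * A₁) *ᵥ w) ≤ μ * ((S *ᵥ (A₁ *ᵥ w)) ⬝ᵥ (A₁ *ᵥ w)))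
    (hδ₀ : 0 ≤ δ) (hδ₁ : δ ≤ 1) (hδ : (1 - δ) * μ = 2 * l * δ) :
    IsErrorBound A₁
      ((1 - (1 - S * A₁) ^ l * (1 - P * B₀ * (c • Pᵀ) * A₁) * (1 - S * A₁) ^ l) * A₁⁻¹) δ := by
  set K := (1 - S * A₁) ^ l with hKdef
  set C := 1 - P * B₀ * (c • Pᵀ) * A₁ with hCdef
  have hK : A₁ * K = Kᵀ * A₁ := mul_one_sub_mul_pow hA₁.transpose_eq hS l
  have hAC : (A₁ * C)ᵀ = A₁ * C := by
    simp only [hCdef, Matrix.mul_sub, Matrix.mul_one, transpose_sub, transpose_mul,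
      transpose_smul, transpose_transpose, hA₁.transpose_eq, h.symm, Matrix.mul_smul,
      Matrix.smul_mul, Matrix.mul_assoc]
  have hE : 1 - (1 - K * C * K) * A₁⁻¹ * A₁ = K * C * K := by
    rw [Matrix.mul_assoc, nonsing_inv_mul _ hA₁.isUnit_det, Matrix.mul_one, sub_sub_cancel]
  have hAE : A₁ * (K * C * K) = Kᵀ * (A₁ * C) * K := by
    rw [← Matrix.mul_assoc, ← Matrix.mul_assoc, hK, Matrix.mul_assoc Kᵀ]
  have hsplit : ∀ v, ((A₁ * (1 - (1 - K * C * K) * A₁⁻¹ * A₁)) *ᵥ v) ⬝ᵥ v =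
      (A₁ *ᵥ ((1 - P * A₀⁻¹ * (c • Pᵀ) * A₁) *ᵥ (K *ᵥ v))) ⬝ᵥ
          ((1 - P * A₀⁻¹ * (c • Pᵀ) * A₁) *ᵥ (K *ᵥ v)) +
        c⁻¹ * (((A₀ * (1 - B₀ * A₀)) *ᵥ ((A₀⁻¹ * (c • Pᵀ) * A₁) *ᵥ (K *ᵥ v))) ⬝ᵥ
          ((A₀⁻¹ * (c • Pᵀ) * A₁) *ᵥ (K *ᵥ v))) := fun v => by
    rw [hE, hAE, transpose_mul_mul_mulVec_dotProduct,
      two_level_energy_eq hA₀ hA₁.transpose_eq hc.ne' hGal]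
  refine ⟨?_, fun v => ?_, fun v => ?_⟩
  · refine transpose_eq_of_mul_mul_symm hA₁.isUnit hA₁.transpose_eq ?_
    rw [Matrix.mul_assoc A₁, ← sub_sub_cancel 1 ((1 - K * C * K) * A₁⁻¹ * A₁), hE,
      Matrix.mul_sub, Matrix.mul_one, hAE, transpose_sub, hA₁.transpose_eq, transpose_mul,
      transpose_mul, transpose_transpose, hAC, ← Matrix.mul_assoc]
  · rw [hsplit]
    exact add_nonneg (hA₁.mulVec_dotProduct_nonneg _)
      (mul_nonneg (inv_nonneg.2 hc.le) (h.nonneg _))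
  · rw [hsplit]
    have hpyth := two_level_energy_eq hA₀ hA₁.transpose_eq hc.ne' hGal 0 (K *ᵥ v)
    simp only [Matrix.mul_zero, Matrix.zero_mul, sub_zero, Matrix.mul_one] at hpyth
    have hsmooth := mul_le_mul_of_nonneg_left (smoothing_property_of_le_inv hA₁ hS hSA l v) hδ₀
    have hcoarse := mul_le_mul_of_nonneg_left (h.le ((A₀⁻¹ * (c • Pᵀ) * A₁) *ᵥ (K *ᵥ v)))
      (inv_nonneg.2 hc.le)
    have happ := mul_le_mul_of_nonneg_left (happrox (K *ᵥ v)) (sub_nonneg.2 hδ₁)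
    rw [← mul_assoc, hδ] at happ
    rw [← hKdef] at hsmooth
    linear_combination hcoarse + happ + hsmooth - δ * hpyth

end ErrorBound

/-- V-cycle multigrid convergence (Bramble–Pasciak/Xu): if each `A_k` is symmetric positive
definite with Galerkin coarsening `A_k = (1/2)(P k)ᵀ A_{k+1} P k`, the smoother
`S_k = ω D_k⁻¹` satisfies `(ω/λ_max(A_k))(v,v) ≤ (S_k v, v) ≤ (A_k⁻¹ v, v)`, and the
coarse-grid correction `T` satisfies `‖T v‖²_{A} ≤ m₀‖A v‖²_{D⁻¹}`, then the V-cycle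
operator `B_k` with `l` smoothing steps satisfies
`‖I - B_k A_k‖_{A_k} ≤ m₀/(2lω + m₀) < 1` for every level `k`. -/
theorem vcycle_uniform_convergence (dim : ℕ → ℕ)
    (A : ∀ k, Matrix (Fin (dim k)) (Fin (dim k)) ℝ)
    (P : ∀ k, Matrix (Fin (dim (k + 1))) (Fin (dim k)) ℝ)
    (ω m0 : ℝ) (l : ℕ) (hω : 0 < ω) (hl : 0 < l) (hm0 : 0 < m0)
    (hA : ∀ k, (A k).PosDef)
    (hGal : ∀ k, A k = ((1 / 2 : ℝ) • (P k)ᵀ) * A (k + 1) * P k)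
    (hsmooth : ∀ k (v : Fin (dim k) → ℝ),
      (ω / (⨆ i, (hA k).1.eigenvalues i)) * (v ⬝ᵥ v) ≤
          ((ω • (Matrix.diagonal fun i => (A k i i)⁻¹)) *ᵥ v) ⬝ᵥ v ∧
        ((ω • (Matrix.diagonal fun i => (A k i i)⁻¹)) *ᵥ v) ⬝ᵥ v ≤ ((A k)⁻¹ *ᵥ v) ⬝ᵥ v)
    (happrox : ∀ k (v : Fin (dim (k + 1)) → ℝ),
      (A (k + 1) *ᵥ
          ((1 - P k * (A k)⁻¹ * ((1 / 2 : ℝ) • (P k)ᵀ) * A (k + 1)) *ᵥ v)) ⬝ᵥ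
          ((1 - P k * (A k)⁻¹ * ((1 / 2 : ℝ) • (P k)ᵀ) * A (k + 1)) *ᵥ v) ≤
        m0 * (((Matrix.diagonal fun i => (A (k + 1) i i)⁻¹) *ᵥ (A (k + 1) *ᵥ v)) ⬝ᵥ
          (A (k + 1) *ᵥ v))) :
    m0 / (2 * l * ω + m0) < 1 ∧
      ∀ k (v : Fin (dim k) → ℝ),
        (A k *ᵥ ((1 - vcycleB dim A P ω l k * A k) *ᵥ v)) ⬝ᵥ
            ((1 - vcycleB dim A P ω l k * A k) *ᵥ v) ≤
          (m0 / (2 * l * ω + m0)) ^ 2 * ((A k *ᵥ v) ⬝ᵥ v) := by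
  have hlω : 0 < 2 * (l : ℝ) * ω := by positivity
  have hδ₀ : 0 ≤ m0 / (2 * l * ω + m0) := by positivity
  have hδ₁ : m0 / (2 * l * ω + m0) < 1 := (div_lt_one (by positivity)).2 (by linarith)
  have hbound : ∀ k, IsErrorBound (A k) (vcycleB dim A P ω l k) (m0 / (2 * l * ω + m0)) := by
    intro k
    induction k with
    | zero => exact isErrorBound_inv (hA 0) hδ₀
    | succ k ih =>
      refine ih.vcycle_succ (μ := m0 / ω) (hA k) (hA (k + 1)) (by norm_num) (hGal k)
        (by rw [transpose_smul, diagonal_transpose]) (fun y => (hsmooth (k + 1) y).2)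
        (fun w => (happrox k w).trans_eq ?_) hδ₀ hδ₁.le ?_
      · rw [smul_mulVec, smul_dotProduct, smul_eq_mul]
        field_simp
      · field_simp
        ring
  exact ⟨hδ₁, fun k v => (hbound k).energy_le (hA k) hδ₀ v⟩
end
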